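/- arXiv:1909.06416 — 3 statements merged into one kernel-verified Lean document; each statement's English description precedes it below -/
import Mathlib

section
/- Let X be a K-convex Banach space and f ∈ L¹_loc(ℝ;X) with f ∈ γ(ℝ;X). Define f_n := ∫_n^{n+1} f(t) dt ∈ X for n ∈ ℤ. Then ‖(f_n)_{n∈ℤ}‖_{ε(ℤ;X)} ≲ ‖f‖_{γ(ℝ;X)}. -/
set_option autoImplicit false

open MeasureTheory ProbabilityTheory ENNReal Set Filter

noncomputable section

universe u v w

/-- Finite Rademacher average: the mean over all sign choices of the norm of the signed sum. -/
def radAvgF {ι X : Type*} [Fintype ι] [DecidableEq ι] [NormedAddCommGroup X]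
    (x : ι → X) : ℝ :=
  (∑ ε : ι → Bool, ‖∑ n, (if ε n then x n else -x n)‖) / 2 ^ (Fintype.card ι)

/-- Rademacher norm of a family: supremum of the finite Rademacher averages over
finite subfamilies. -/
def radNorm {ι X : Type*} [DecidableEq ι] [NormedAddCommGroup X] (x : ι → X) : ℝ≥0∞ :=
  ⨆ s : Finset ι, ENNReal.ofReal (radAvgF (fun n : {a // a ∈ s} => x n.1))

/-- Product of standard Gaussian measures on `Fin N → ℝ`. -/
def gaussPi (N : ℕ) : Measure (Fin N → ℝ) := Measure.pi fun _ => gaussianReal 0 1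

/-- The γ-(summing) norm of the Pettis integral operator associated with `f : S → X`:
the supremum, over finite orthonormal systems `g` in `L²(μ)`, of the square root of the
second Gaussian moment of `∑ γₙ • ∫ gₙ f dμ`. -/
def gammaNorm {S X : Type*} [MeasurableSpace S] [NormedAddCommGroup X] [NormedSpace ℝ X]
    (μ : Measure S) (f : S → X) : ℝ≥0∞ :=
  ⨆ (N : ℕ) (g : Fin N → S → ℝ)
      (_ : ∀ n m : Fin N, (∫ s, g n s * g m s ∂μ) = if n = m then 1 else 0),
    ENNReal.ofReal (Real.sqrt (∫ ω, ‖∑ n, ω n • (∫ s, g n s • f s ∂μ)‖ ^ 2 ∂(gaussPi N)))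

/-- `f` belongs to `γ(S;X)`: the Pettis integral operator of `f` is approximable in the
γ-norm by finite-rank kernel operators with `L²` kernels. -/
def MemGamma {S X : Type*} [MeasurableSpace S] [NormedAddCommGroup X] [NormedSpace ℝ X]
    (μ : Measure S) (f : S → X) : Prop :=
  ∀ ε : ℝ≥0∞, 0 < ε → ∃ (N : ℕ) (g : Fin N → S → ℝ) (x : Fin N → X),
    (∀ n, MemLp (g n) 2 μ) ∧
    gammaNorm μ (fun s => f s - ∑ n, g n s • x n) ≤ ε

/-- A Banach space is K-convex: Rademacher averages are computed, up to a constant,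
by duality against Rademacher-normalized sequences of functionals. -/
def KConvex (X : Type*) [NormedAddCommGroup X] [NormedSpace ℝ X] : Prop :=
  ∃ C : ℝ, 0 < C ∧ ∀ (N : ℕ) (x : Fin N → X) (r : ℝ),
    (∀ φ : Fin N → (X →L[ℝ] ℝ), radAvgF φ ≤ 1 → |∑ n, φ n (x n)| ≤ r) →
    radAvgF x ≤ C * r

/-!
Rademacher sums are dominated by Gaussian sums in every Banach space. With `κ = 𝔼|γ|`,
`κ ‖∑ εₙ xₙ‖ = ‖𝔼 ∑ εₙ |γₙ| xₙ‖ ≤ 𝔼 ‖∑ εₙ |γₙ| xₙ‖`; after averaging over the signs `ε`, the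
symmetry of the Gaussian law turns the right-hand side into `𝔼 ‖∑ γₙ xₙ‖ ≤ (𝔼 ‖∑ γₙ xₙ‖²)^{1/2}`.
The indicators of the intervals `(n, n + 1]` form an orthonormal system in `L²(ℝ)` whose Pettis
integrals against `f` are the `fₙ`, so this Gaussian moment is one of the quantities whose
supremum is `‖f‖_γ`.
-/

lemma integrable_abs_gaussianReal (μ : ℝ) (v : NNReal) :
    Integrable (fun t : ℝ => |t|) (gaussianReal μ v) :=
  ((memLp_id_gaussianReal 1).integrable le_rfl).abs

lemma integral_abs_gaussianReal_pos (μ : ℝ) {v : NNReal} (hv : v ≠ 0) :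
    0 < ∫ t, |t| ∂gaussianReal μ v := by
  have := nullSingletonClass_gaussianReal (μ := μ) hv
  rw [integral_pos_iff_support_of_nonneg abs_nonneg (integrable_abs_gaussianReal μ v)]
  have hsupp : Function.support (fun t : ℝ => |t|) = {0}ᶜ := by ext; simp
  rw [hsupp, prob_compl_eq_one_sub (measurableSet_singleton 0), measure_singleton]
  simp

lemma measurePreserving_const_mul_gaussianReal (v : NNReal) {c : ℝ} (hc : |c| = 1) :
    MeasurePreserving (c * ·) (gaussianReal 0 v) (gaussianReal 0 v) := by
  refine ⟨measurable_const_mul c, ?_⟩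
  rw [gaussianReal_map_const_mul, mul_zero]
  congr
  ext
  simp [← sq_abs c, hc]

instance (N : ℕ) : IsProbabilityMeasure (gaussPi N) := by
  unfold gaussPi; infer_instance

lemma measurePreserving_mul_gaussPi {N : ℕ} {c : Fin N → ℝ} (hc : ∀ n, |c n| = 1) :
    MeasurePreserving (fun ω n => c n * ω n) (gaussPi N) (gaussPi N) :=
  measurePreserving_pi _ _ fun n => measurePreserving_const_mul_gaussianReal 1 (hc n)

lemma memLp_gaussPi_eval (N : ℕ) (p : NNReal) (n : Fin N) :
    MemLp (fun ω : Fin N → ℝ => ω n) p (gaussPi N) :=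
  (memLp_id_gaussianReal p).comp_measurePreserving (measurePreserving_eval _ n)

lemma memLp_sum_smul_const {Ω E : Type*} [MeasurableSpace Ω] {μ : Measure Ω}
    [NormedAddCommGroup E] [NormedSpace ℝ E] {ι : Type*} [Fintype ι] {p : ℝ≥0∞}
    {g : ι → Ω → ℝ} (hg : ∀ n, MemLp (g n) p μ) (x : ι → E) :
    MemLp (fun ω => ∑ n, g n ω • x n) p μ :=
  memLp_finsetSum _ fun n _ => (memLp_top_const (x n)).smul (hg n)

def boolSign (b : Bool) : ℝ := if b then 1 else -1

lemma abs_boolSign (b : Bool) : |boolSign b| = 1 := by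
  cases b <;> simp [boolSign]

section Rademacher

variable {ι X : Type*} [Fintype ι] [DecidableEq ι] [NormedAddCommGroup X]

lemma radAvgF_comp_equiv {ι' : Type*} [Fintype ι'] [DecidableEq ι'] (e : ι ≃ ι')
    (x : ι' → X) : radAvgF (fun i => x (e i)) = radAvgF x := by
  unfold radAvgF
  rw [Fintype.card_congr e]
  congr 1
  refine Fintype.sum_equiv (e.arrowCongr (Equiv.refl Bool)) _ _ fun ε => ?_
  congr 1
  exact Fintype.sum_equiv e _ _ fun i => by simp [Equiv.arrowCongr]

variable [NormedSpace ℝ X]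

lemma radAvgF_eq_sum_boolSign (x : ι → X) :
    radAvgF x = (∑ ε : ι → Bool, ‖∑ n, boolSign (ε n) • x n‖) / 2 ^ Fintype.card ι := by
  unfold radAvgF
  congr 1
  refine Finset.sum_congr rfl fun ε _ => congrArg norm (Finset.sum_congr rfl fun n _ => ?_)
  cases ε n <;> simp [boolSign]

lemma radAvgF_abs_smul (c : ι → ℝ) (x : ι → X) :
    radAvgF (fun n => |c n| • x n) = radAvgF (fun n => c n • x n) := by
  let σ : (ι → Bool) → (ι → Bool) := fun ε n => if c n < 0 then !ε n else ε n
  have hσ : Function.Involutive σ := fun ε => funext fun n => by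
    by_cases h : c n < 0 <;> simp [σ, h]
  have hsign : ∀ ε n, boolSign (ε n) * |c n| = boolSign (σ ε n) * c n := fun ε n => by
    by_cases h : c n < 0
    · cases hε : ε n <;> simp [σ, h, hε, abs_of_neg h, boolSign]
    · simp [σ, h, abs_of_nonneg (not_lt.1 h)]
  simp only [radAvgF_eq_sum_boolSign, smul_smul, hsign]
  congr 1
  exact Fintype.sum_bijective σ hσ.bijective _ _ fun ε => rfl

end Rademacher

section Comparison

variable {X : Type*} [NormedAddCommGroup X] [NormedSpace ℝ X] {N : ℕ}

lemma integrable_norm_sum_smul_gaussPi {g : Fin N → (Fin N → ℝ) → ℝ}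
    (hg : ∀ n, MemLp (g n) 1 (gaussPi N)) (x : Fin N → X) :
    Integrable (fun ω => ‖∑ n, g n ω • x n‖) (gaussPi N) :=
  (memLp_one_iff_integrable.1 (memLp_sum_smul_const hg x)).norm

lemma integral_radAvgF_smul_gaussPi (x : Fin N → X) :
    ∫ ω, radAvgF (fun n => ω n • x n) ∂gaussPi N = ∫ ω, ‖∑ n, ω n • x n‖ ∂gaussPi N := by
  have hflip : ∀ ε : Fin N → Bool, ∫ ω, ‖∑ n, (boolSign (ε n) * ω n) • x n‖ ∂gaussPi N
      = ∫ ω, ‖∑ n, ω n • x n‖ ∂gaussPi N := fun ε => by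
    have hT := measurePreserving_mul_gaussPi fun n => abs_boolSign (ε n)
    conv_rhs => rw [← hT.map_eq]
    have hcont : Continuous fun ω : Fin N → ℝ => ‖∑ n, ω n • x n‖ := by fun_prop
    rw [integral_map hT.measurable.aemeasurable hcont.aestronglyMeasurable]
  have hint : ∀ ε : Fin N → Bool,
      Integrable (fun ω => ‖∑ n, (boolSign (ε n) * ω n) • x n‖) (gaussPi N) := fun ε =>
    integrable_norm_sum_smul_gaussPi (fun n => (memLp_gaussPi_eval N 1 n).const_mul _) x
  simp only [radAvgF_eq_sum_boolSign, smul_smul, Fintype.card_fin]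
  rw [integral_div, integral_finsetSum _ fun ε _ => hint ε, Finset.sum_congr rfl fun ε _ => hflip ε,
    Finset.sum_const, Finset.card_univ, Fintype.card_fun, Fintype.card_bool, Fintype.card_fin,
    nsmul_eq_mul]
  push_cast
  field_simp

variable [CompleteSpace X]

lemma integral_abs_gaussianReal_mul_radAvgF_le (x : Fin N → X) :
    (∫ t, |t| ∂gaussianReal 0 1) * radAvgF x
      ≤ ∫ ω, radAvgF (fun n => |ω n| • x n) ∂gaussPi N := by
  set κ := ∫ t, |t| ∂gaussianReal 0 1
  have hmean : ∀ c : Fin N → ℝ,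
      ∫ ω, ∑ n, (c n * |ω n|) • x n ∂gaussPi N = κ • ∑ n, c n • x n := fun c => by
    rw [integral_finsetSum _ fun n _ =>
      ((integrable_comp_eval (integrable_abs_gaussianReal 0 1)).const_mul _).smul_const _,
      Finset.smul_sum]
    refine Finset.sum_congr rfl fun n _ => ?_
    have hcoord : ∫ ω, |ω n| ∂gaussPi N = κ :=
      integral_comp_eval (integrable_abs_gaussianReal 0 1).aestronglyMeasurable
    rw [integral_smul_const, integral_const_mul, hcoord, smul_smul, mul_comm]
  have hpoint : ∀ c : Fin N → ℝ,
      κ * ‖∑ n, c n • x n‖ ≤ ∫ ω, ‖∑ n, (c n * |ω n|) • x n‖ ∂gaussPi N := fun c =>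
    calc κ * ‖∑ n, c n • x n‖ = ‖κ • ∑ n, c n • x n‖ := by
          rw [norm_smul, Real.norm_of_nonneg (integral_nonneg fun t => abs_nonneg t)]
      _ = ‖∫ ω, ∑ n, (c n * |ω n|) • x n ∂gaussPi N‖ := by rw [hmean]
      _ ≤ _ := norm_integral_le_integral_norm _
  have hint : ∀ ε : Fin N → Bool,
      Integrable (fun ω => ‖∑ n, (boolSign (ε n) * |ω n|) • x n‖) (gaussPi N) := fun ε =>
    integrable_norm_sum_smul_gaussPi (fun n => (memLp_gaussPi_eval N 1 n).abs.const_mul _) x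
  simp only [radAvgF_eq_sum_boolSign, smul_smul]
  rw [integral_div, integral_finsetSum _ fun ε _ => hint ε, mul_div_assoc', Finset.mul_sum]
  gcongr with ε
  exact hpoint _

theorem radAvgF_le_integral_norm_gaussPi (x : Fin N → X) :
    radAvgF x ≤ (∫ t, |t| ∂gaussianReal 0 1)⁻¹ * ∫ ω, ‖∑ n, ω n • x n‖ ∂gaussPi N := by
  rw [← div_eq_inv_mul, le_div_iff₀ (integral_abs_gaussianReal_pos 0 one_ne_zero), mul_comm]
  calc _ ≤ ∫ ω, radAvgF (fun n => |ω n| • x n) ∂gaussPi N :=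
        integral_abs_gaussianReal_mul_radAvgF_le x
    _ = ∫ ω, radAvgF (fun n => ω n • x n) ∂gaussPi N := by simp only [radAvgF_abs_smul]
    _ = _ := integral_radAvgF_smul_gaussPi x

end Comparison

lemma integral_le_sqrt_integral_sq {Ω : Type*} [MeasurableSpace Ω] {μ : Measure Ω}
    [IsProbabilityMeasure μ] {f : Ω → ℝ} (hf : MemLp f 2 μ) :
    ∫ ω, f ω ∂μ ≤ Real.sqrt (∫ ω, f ω ^ 2 ∂μ) := by
  have hvar := variance_nonneg f μ
  rw [variance_eq_sub hf] at hvar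
  exact Real.le_sqrt_of_sq_le (by simpa using hvar)

lemma ofReal_radAvgF_le_gammaNorm {S X : Type*} [MeasurableSpace S] [NormedAddCommGroup X]
    [NormedSpace ℝ X] [CompleteSpace X] (μ : Measure S) (f : S → X) {N : ℕ}
    {g : Fin N → S → ℝ} (hg : ∀ n m, ∫ s, g n s * g m s ∂μ = if n = m then 1 else 0) :
    ENNReal.ofReal (radAvgF fun n => ∫ s, g n s • f s ∂μ)
      ≤ ENNReal.ofReal (∫ t, |t| ∂gaussianReal 0 1)⁻¹ * gammaNorm μ f := by
  set y : Fin N → X := fun n => ∫ s, g n s • f s ∂μ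
  have hL2 : MemLp (fun ω : Fin N → ℝ => ‖∑ n, ω n • y n‖) 2 (gaussPi N) :=
    (memLp_sum_smul_const (fun n => memLp_gaussPi_eval N 2 n) y).norm
  calc ENNReal.ofReal (radAvgF y)
      ≤ ENNReal.ofReal ((∫ t, |t| ∂gaussianReal 0 1)⁻¹ *
          Real.sqrt (∫ ω, ‖∑ n, ω n • y n‖ ^ 2 ∂gaussPi N)) := by
        refine ENNReal.ofReal_le_ofReal ((radAvgF_le_integral_norm_gaussPi y).trans ?_)
        gcongr
        exact integral_le_sqrt_integral_sq hL2
    _ = ENNReal.ofReal (∫ t, |t| ∂gaussianReal 0 1)⁻¹ *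
          ENNReal.ofReal (Real.sqrt (∫ ω, ‖∑ n, ω n • y n‖ ^ 2 ∂gaussPi N)) :=
        ENNReal.ofReal_mul (inv_nonneg.2 (integral_nonneg fun t => abs_nonneg t))
    _ ≤ _ := by
        gcongr
        exact le_iSup_of_le N (le_iSup_of_le g (le_iSup_of_le hg le_rfl))

lemma integral_indicator_mul_indicator_eq_ite {S ι : Type*} [MeasurableSpace S] [DecidableEq ι]
    (μ : Measure S) {A : ι → Set S} (hA : ∀ n, MeasurableSet (A n))
    (hdisj : Pairwise fun n m => Disjoint (A n) (A m)) (hμ : ∀ n, μ (A n) = 1) (n m : ι) :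
    ∫ s, (A n).indicator (1 : S → ℝ) s * (A m).indicator 1 s ∂μ = if n = m then 1 else 0 := by
  have hprod : (fun s => (A n).indicator (1 : S → ℝ) s * (A m).indicator 1 s)
      = (A n ∩ A m).indicator 1 := by
    rw [inter_indicator_one]; rfl
  rw [hprod, integral_indicator_one ((hA n).inter (hA m))]
  split_ifs with h
  · simp [h, measureReal_def, hμ]
  · simp [(hdisj h).inter_eq]

theorem statement6_general {X : Type*} [NormedAddCommGroup X] [NormedSpace ℝ X] [CompleteSpace X] :
    ∃ c : ℝ≥0∞, c ≠ ⊤ ∧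
      ∀ f : ℝ → X, LocallyIntegrable f volume → MemGamma volume f →
        radNorm (fun n : ℤ => ∫ t in Set.Ioc (n : ℝ) ((n : ℝ) + 1), f t) ≤
          c * gammaNorm volume f := by
  refine ⟨ENNReal.ofReal (∫ t, |t| ∂gaussianReal 0 1)⁻¹, ENNReal.ofReal_ne_top,
    fun f _ _ => iSup_le fun s => ?_⟩
  let e : Fin s.card ≃ s := s.equivFin.symm
  let A : Fin s.card → Set ℝ := fun k => Ioc ((e k : ℤ) : ℝ) ((e k : ℤ) + 1)
  have horth := integral_indicator_mul_indicator_eq_ite volume (A := A)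
    (fun _ => measurableSet_Ioc)
    ((pairwise_disjoint_Ioc_intCast ℝ).comp_of_injective (Subtype.val_injective.comp e.injective))
    (fun k => by simp [A])
  have hpettis : ∀ k, ∫ t, (A k).indicator (1 : ℝ → ℝ) t • f t = ∫ t in A k, f t := fun k => by
    simp_rw [← indicator_smul_apply_left, Pi.one_apply, one_smul]
    exact integral_indicator measurableSet_Ioc
  rw [← radAvgF_comp_equiv e]
  simpa only [hpettis] using ofReal_radAvgF_le_gammaNorm volume f horth

/-- For a K-convex space `X` and `f ∈ L¹_loc ∩ γ(ℝ;X)`, the sequence of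
unit-interval averages `fₙ = ∫_n^{n+1} f` satisfies `‖(fₙ)‖_{ε(ℤ;X)} ≲ ‖f‖_{γ(ℝ;X)}`. -/
theorem statement6 {X : Type*} [NormedAddCommGroup X] [NormedSpace ℝ X] [CompleteSpace X]
    (hK : KConvex X) :
    ∃ c : ℝ≥0∞, c ≠ ⊤ ∧
      ∀ f : ℝ → X, LocallyIntegrable f volume → MemGamma volume f →
        radNorm (fun n : ℤ => ∫ t in Set.Ioc (n : ℝ) ((n : ℝ) + 1), f t) ≤
          c * gammaNorm volume f :=
  statement6_general
end
end

section
/- Let X and Y be Banach spaces, -∞ < a < b < ∞, and f : (a,b) → L(X,Y) differentiable with integrable derivative (in operator norm). Then the range f((a,b)) is R-bounded with R(f((a,b))) ≤ ‖lim_{t↓a} f(t)‖_{L(X,Y)} + ∫_a^b ‖f'(t)‖_{L(X,Y)} dt, where the limit is in the strong operator topology. -/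
set_option autoImplicit false

open MeasureTheory ProbabilityTheory ENNReal Set Filter

noncomputable section

universe u v w

/-- A set of operators `𝒯` is R-bounded with constant `C`. -/
def RBddWith {X Y : Type*} [NormedAddCommGroup X] [NormedSpace ℝ X]
    [NormedAddCommGroup Y] [NormedSpace ℝ Y] (𝒯 : Set (X →L[ℝ] Y)) (C : ℝ) : Prop :=
  ∀ (N : ℕ) (T : Fin N → X →L[ℝ] Y), (∀ n, T n ∈ 𝒯) →
    ∀ x : Fin N → X, radAvgF (fun n => (T n) (x n)) ≤ C * radAvgF x

/-- contraction: restricting a signed sum to a subset does not increase the total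
Rademacher sum. -/
lemma aux_contraction {N : ℕ} {X : Type*} [NormedAddCommGroup X] [NormedSpace ℝ X]
    (x : Fin N → X) (S : Finset (Fin N)) :
    ∑ ε : Fin N → Bool, ‖∑ n ∈ S, (if ε n then x n else -x n)‖ ≤
      ∑ ε : Fin N → Bool, ‖∑ n, (if ε n then x n else -x n)‖ := by
  classical
  set A : (Fin N → Bool) → X := fun ε => ∑ n, (if ε n then x n else -x n) with hA
  set fl : (Fin N → Bool) → (Fin N → Bool) := fun ε n => if n ∈ S then ε n else !ε n with hfl
  have flinv : Function.Involutive fl := by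
    intro ε; funext n; by_cases h : n ∈ S <;> simp [hfl, h]
  have key : ∀ ε : Fin N → Bool,
      ‖∑ n ∈ S, (if ε n then x n else -x n)‖ ≤ (‖A ε‖ + ‖A (fl ε)‖) / 2 := by
    intro ε
    have h2 : A ε + A (fl ε)
        = ∑ n, (if n ∈ S then ((if ε n then x n else -x n) + (if ε n then x n else -x n)) else 0) := by
      rw [hA, ← Finset.sum_add_distrib]
      refine Finset.sum_congr rfl fun n _ => ?_
      by_cases h : n ∈ S <;> by_cases he : ε n <;> simp [hfl, h, he]
    have h3 : (∑ n ∈ S, (if ε n then x n else -x n)) = (1/2 : ℝ) • (A ε + A (fl ε)) := by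
      rw [h2, Finset.sum_ite_mem, Finset.univ_inter, Finset.smul_sum]
      refine Finset.sum_congr rfl fun n _ => ?_
      rw [smul_add]
      module
    rw [h3, norm_smul]
    have : ‖(1/2 : ℝ)‖ = 1/2 := by norm_num
    rw [this, div_mul_eq_mul_div, one_mul]
    gcongr
    exact norm_add_le _ _
  calc ∑ ε : Fin N → Bool, ‖∑ n ∈ S, (if ε n then x n else -x n)‖
      ≤ ∑ ε : Fin N → Bool, (‖A ε‖ + ‖A (fl ε)‖) / 2 :=
        Finset.sum_le_sum fun ε _ => key ε
    _ = (∑ ε : Fin N → Bool, ‖A ε‖ + ∑ ε : Fin N → Bool, ‖A (fl ε)‖) / 2 := by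
        rw [← Finset.sum_div, Finset.sum_add_distrib]
    _ = ∑ ε : Fin N → Bool, ‖A ε‖ := by
        have he : ∑ ε : Fin N → Bool, ‖A (fl ε)‖ = ∑ ε : Fin N → Bool, ‖A ε‖ :=
          Fintype.sum_bijective fl flinv.bijective _ _ (fun ε => rfl)
        rw [he]; ring

lemma aux_rep {X : Type*} {Y : Type*}
    [NormedAddCommGroup X] [NormedSpace ℝ X]
    [NormedAddCommGroup Y] [NormedSpace ℝ Y] [CompleteSpace Y]
    {a b : ℝ} (f f' : ℝ → (X →L[ℝ] Y)) (L : X →L[ℝ] Y)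
    (hderiv : ∀ t ∈ Set.Ioo a b, HasDerivAt f (f' t) t)
    (hint : IntegrableOn f' (Set.Ioo a b) volume)
    (hlim : ∀ x : X, Tendsto (fun t => f t x) (nhdsWithin a (Set.Ioi a)) (nhds (L x)))
    {v : ℝ} (hv : v ∈ Set.Ioo a b) :
    f v = L + ∫ s in Set.Ioc a v, f' s := by
  have hIoc : Set.Ioc a v ⊆ Set.Ioo a b := fun s hs => ⟨hs.1, lt_of_le_of_lt hs.2 hv.2⟩
  have hii : IntervalIntegrable f' volume a v := by
    rw [intervalIntegrable_iff_integrableOn_Ioc_of_le hv.1.le]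
    exact hint.mono_set hIoc
  -- continuity of u ↦ ∫ v..u at a from the right
  have hcw : ContinuousWithinAt (fun u => ∫ s in v..u, f' s) (Set.Icc a v) a := by
    apply intervalIntegral.continuousWithinAt_primitive (by simp)
    rw [min_eq_right hv.1.le, max_self]
    exact hii
  have hcont : Tendsto (fun u => ∫ s in u..v, f' s) (nhdsWithin a (Set.Ioi a))
      (nhds (∫ s in a..v, f' s)) := by
    have h1 : Tendsto (fun u => ∫ s in v..u, f' s) (nhdsWithin a (Set.Ioi a))
        (nhds (∫ s in v..a, f' s)) := by
      have := hcw.tendsto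
      rw [← nhdsWithin_Ioo_eq_nhdsGT hv.1]
      exact this.mono_left (nhdsWithin_mono a Set.Ioo_subset_Icc_self)
    have h2 : Tendsto (fun u => -∫ s in v..u, f' s) (nhdsWithin a (Set.Ioi a))
        (nhds (-∫ s in v..a, f' s)) := h1.neg
    simpa [intervalIntegral.integral_symm v] using h2
  refine ContinuousLinearMap.ext fun x₀ => ?_
  have happ : Tendsto (fun u => (f v - ∫ s in u..v, f' s) x₀) (nhdsWithin a (Set.Ioi a))
      (nhds ((f v - ∫ s in a..v, f' s) x₀)) := by
    have hA : Tendsto (fun u => f v - ∫ s in u..v, f' s) (nhdsWithin a (Set.Ioi a))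
        (nhds (f v - ∫ s in a..v, f' s)) := tendsto_const_nhds.sub hcont
    exact ((ContinuousLinearMap.apply ℝ Y x₀).continuous.tendsto _).comp hA
  have heq : Tendsto (fun u => f u x₀) (nhdsWithin a (Set.Ioi a))
      (nhds ((f v - ∫ s in a..v, f' s) x₀)) := by
    refine happ.congr' ?_
    filter_upwards [Ioo_mem_nhdsGT_of_mem ⟨le_refl a, hv.1⟩] with u hu
    have huv : IntervalIntegrable f' volume u v := by
      rw [intervalIntegrable_iff_integrableOn_Ioc_of_le hu.2.le]
      exact hint.mono_set fun s hs => ⟨lt_trans hu.1 hs.1, lt_of_le_of_lt hs.2 hv.2⟩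
    have hftc : ∫ s in u..v, f' s = f v - f u := by
      apply intervalIntegral.integral_eq_sub_of_hasDerivAt (fun s hs => ?_) huv
      rw [Set.uIcc_of_le hu.2.le] at hs
      exact hderiv s ⟨lt_of_lt_of_le hu.1 hs.1, lt_of_le_of_lt hs.2 hv.2⟩
    simp [hftc]
  have := tendsto_nhds_unique heq (hlim x₀)
  have hpt : f v x₀ = L x₀ + (∫ s in a..v, f' s) x₀ := by
    rw [← this]; simp
  rw [ContinuousLinearMap.add_apply, ← intervalIntegral.integral_of_le hv.1.le]
  exact hpt

/-- An operator-valued function on `(a,b)` with integrable derivative has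
R-bounded range, with R-bound at most `‖lim_{t↓a} f(t)‖ + ∫_a^b ‖f'(t)‖ dt`. -/
theorem statement12 {X : Type u} {Y : Type v}
    [NormedAddCommGroup X] [NormedSpace ℝ X]
    [NormedAddCommGroup Y] [NormedSpace ℝ Y] [CompleteSpace Y]
    {a b : ℝ} (hab : a < b) (f f' : ℝ → (X →L[ℝ] Y)) (L : X →L[ℝ] Y)
    (hderiv : ∀ t ∈ Set.Ioo a b, HasDerivAt f (f' t) t)
    (hint : IntegrableOn f' (Set.Ioo a b) volume)
    (hlim : ∀ x : X, Tendsto (fun t => f t x) (nhdsWithin a (Set.Ioi a)) (nhds (L x))) :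
    RBddWith (f '' Set.Ioo a b) (‖L‖ + ∫ t in Set.Ioo a b, ‖f' t‖) := by
  intro N T hT x
  classical
  choose t ht hfT using fun n => (Set.mem_image _ _ _).mp (hT n)
  -- the total Rademacher sum for x
  set K : ℝ := ∑ ε : Fin N → Bool, ‖∑ n, (if ε n then x n else -x n)‖ with hK
  have hK0 : 0 ≤ K := Finset.sum_nonneg fun ε _ => norm_nonneg _
  -- integrands
  set w : Fin N → ℝ → Y :=
    fun n s => (Set.Ioc a (t n)).indicator (fun s' => f' s' (x n)) s with hw
  have hIocsub : ∀ n, Set.Ioc a (t n) ⊆ Set.Ioo a b :=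
    fun n s hs => ⟨hs.1, lt_of_le_of_lt hs.2 (ht n).2⟩
  have hg : ∀ n, IntegrableOn (fun s => f' s (x n)) (Set.Ioo a b) volume := by
    intro n
    refine Integrable.mono' (hint.norm.mul_const ‖x n‖) ?_ ?_
    · exact (ContinuousLinearMap.apply ℝ Y (x n)).continuous.comp_aestronglyMeasurable
        hint.aestronglyMeasurable
    · exact Filter.Eventually.of_forall fun s => (f' s).le_opNorm (x n)
  have hwInt : ∀ n, IntegrableOn (w n) (Set.Ioo a b) volume :=
    fun n => (hg n).indicator measurableSet_Ioc
  -- signed combined integrand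
  set F : (Fin N → Bool) → ℝ → Y :=
    fun ε s => ∑ n, (if ε n then w n s else -(w n s)) with hF
  have hFint : ∀ ε, IntegrableOn (F ε) (Set.Ioo a b) volume := by
    intro ε
    apply integrable_finset_sum
    intro n _
    by_cases he : ε n <;> simp only [he, if_true, if_false]
    · exact hwInt n
    · exact (hwInt n).neg
  -- representation of each summand
  have hAeq : ∀ ε : Fin N → Bool,
      (∑ n, (if ε n then T n (x n) else -(T n (x n))))
        = L (∑ n, (if ε n then x n else -x n)) + ∫ s in Set.Ioo a b, F ε s := by
    intro ε
    have hTn : ∀ n, T n (x n)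
        = L (x n) + ∫ s in Set.Ioo a b, w n s := by
      intro n
      have h1 : f (t n) = L + ∫ s in Set.Ioc a (t n), f' s :=
        aux_rep f f' L hderiv hint hlim (ht n)
      have h2 : (∫ s in Set.Ioc a (t n), f' s) (x n)
          = ∫ s in Set.Ioc a (t n), f' s (x n) :=
        ContinuousLinearMap.integral_apply (hint.mono_set (hIocsub n)) (x n)
      have h3 : ∫ s in Set.Ioo a b, w n s = ∫ s in Set.Ioc a (t n), f' s (x n) := by
        rw [hw]
        rw [setIntegral_indicator measurableSet_Ioc,
          Set.inter_eq_right.mpr (hIocsub n)]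
      rw [← hfT n, h1, h3, ContinuousLinearMap.add_apply, h2]
    have step : ∀ n, (if ε n then T n (x n) else -(T n (x n)))
        = L (if ε n then x n else -x n)
          + (if ε n then ∫ s in Set.Ioo a b, w n s else -∫ s in Set.Ioo a b, w n s) := by
      intro n
      by_cases he : ε n
      · simp [he, hTn n]
      · rw [if_neg he, if_neg he, if_neg he, hTn n, neg_add, map_neg]
    rw [Finset.sum_congr rfl (fun n _ => step n), Finset.sum_add_distrib, ← map_sum]
    congr 1
    have : ∀ n : Fin N, (if ε n then ∫ s in Set.Ioo a b, w n s else -∫ s in Set.Ioo a b, w n s)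
        = ∫ s in Set.Ioo a b, (if ε n then w n s else -(w n s)) := by
      intro n
      by_cases he : ε n <;> simp [he, integral_neg]
    rw [Finset.sum_congr rfl (fun n _ => this n),
      ← integral_finset_sum]
    intro n _
    by_cases he : ε n <;> simp only [he, if_true, if_false]
    · exact hwInt n
    · exact (hwInt n).neg
  -- pointwise bound on F
  have hFbd : ∀ s, (∑ ε : Fin N → Bool, ‖F ε s‖) ≤ ‖f' s‖ * K := by
    intro s
    set S : Finset (Fin N) := Finset.univ.filter (fun n => s ∈ Set.Ioc a (t n)) with hS
    have hFs : ∀ ε : Fin N → Bool,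
        F ε s = f' s (∑ n ∈ S, (if ε n then x n else -x n)) := by
      intro ε
      rw [hF, map_sum]
      rw [show (∑ n ∈ S, f' s (if ε n then x n else -x n))
          = ∑ n, (if s ∈ Set.Ioc a (t n) then f' s (if ε n then x n else -x n) else 0) from
        Finset.sum_filter _ _]
      refine Finset.sum_congr rfl fun n _ => ?_
      have hwval : w n s = if s ∈ Set.Ioc a (t n) then f' s (x n) else 0 := by
        simp only [hw, Set.indicator_apply]
      by_cases hm : s ∈ Set.Ioc a (t n)
      · by_cases he : ε n
        · rw [if_pos he, if_pos he, hwval, if_pos hm]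
        · rw [if_neg he, if_neg he, hwval, if_pos hm, map_neg, if_pos hm]
      · rw [if_neg hm, hwval, if_neg hm]
        by_cases he : ε n
        · rw [if_pos he]
        · rw [if_neg he, neg_zero]
    calc (∑ ε : Fin N → Bool, ‖F ε s‖)
        = ∑ ε : Fin N → Bool, ‖f' s (∑ n ∈ S, (if ε n then x n else -x n))‖ := by
          exact Finset.sum_congr rfl fun ε _ => by rw [hFs ε]
      _ ≤ ∑ ε : Fin N → Bool, ‖f' s‖ * ‖∑ n ∈ S, (if ε n then x n else -x n)‖ :=
          Finset.sum_le_sum fun ε _ => (f' s).le_opNorm _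
      _ = ‖f' s‖ * ∑ ε : Fin N → Bool, ‖∑ n ∈ S, (if ε n then x n else -x n)‖ := by
          rw [Finset.mul_sum]
      _ ≤ ‖f' s‖ * K := by
          exact mul_le_mul_of_nonneg_left (aux_contraction x S) (norm_nonneg _)
  -- main estimate on the sum over signs
  have main : (∑ ε : Fin N → Bool, ‖∑ n, (if ε n then T n (x n) else -(T n (x n)))‖)
      ≤ (‖L‖ + ∫ s in Set.Ioo a b, ‖f' s‖) * K := by
    calc (∑ ε : Fin N → Bool, ‖∑ n, (if ε n then T n (x n) else -(T n (x n)))‖)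
        ≤ ∑ ε : Fin N → Bool,
            (‖L‖ * ‖∑ n, (if ε n then x n else -x n)‖ + ∫ s in Set.Ioo a b, ‖F ε s‖) := by
          refine Finset.sum_le_sum fun ε _ => ?_
          rw [hAeq ε]
          refine (norm_add_le _ _).trans (add_le_add (L.le_opNorm _) ?_)
          exact norm_integral_le_integral_norm _
      _ = ‖L‖ * K + ∑ ε : Fin N → Bool, ∫ s in Set.Ioo a b, ‖F ε s‖ := by
          rw [Finset.sum_add_distrib, Finset.mul_sum]
      _ ≤ ‖L‖ * K + (∫ s in Set.Ioo a b, ‖f' s‖) * K := by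
          gcongr
          have hswap : (∑ ε : Fin N → Bool, ∫ s in Set.Ioo a b, ‖F ε s‖)
              = ∫ s in Set.Ioo a b, ∑ ε : Fin N → Bool, ‖F ε s‖ :=
            (integral_finset_sum _ fun ε _ => (hFint ε).norm).symm
          rw [hswap]
          calc (∫ s in Set.Ioo a b, ∑ ε : Fin N → Bool, ‖F ε s‖)
              ≤ ∫ s in Set.Ioo a b, ‖f' s‖ * K := by
                refine integral_mono (integrable_finset_sum _ fun ε _ => (hFint ε).norm)
                  (hint.norm.mul_const K) hFbd
            _ = (∫ s in Set.Ioo a b, ‖f' s‖) * K := by rw [integral_mul_const]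
      _ = (‖L‖ + ∫ s in Set.Ioo a b, ‖f' s‖) * K := by ring
  -- conclude
  have h2N : (0:ℝ) < 2 ^ N := by positivity
  simp only [radAvgF, Fintype.card_fin]
  rw [← hK, show (‖L‖ + ∫ t in Set.Ioo a b, ‖f' t‖) * (K / 2 ^ N)
      = ((‖L‖ + ∫ t in Set.Ioo a b, ‖f' t‖) * K) / 2 ^ N from (mul_div_assoc _ _ _).symm]
  gcongr
end
end

section
/- Let (𝕏, 𝔅, μ, S) be an outer space whose generated outer measure is σ-finite, valued in a topological vector space X. Let 𝔪 be a positive Borel measure on 𝕏 such that: (i) there is C < ∞ with ‖∫_B F d𝔪‖_X ≤ C ‖F‖_{S(B)} μ(B) for every generating set B ∈ 𝔅 and every F ∈ L¹(B, 𝔪|_B; X); and (ii) μ(A) = 0 implies 𝔪(A) = 0 for Borel A. Then ‖∫_𝕏 F d𝔪‖_X ≲ C ‖F‖_{L¹_μ S} for all F ∈ L¹(𝕏, 𝔪; X). -/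
/-!
For each dyadic level `2 ^ k` pick generating sets `c k i` such that `F` has outer size at most
`2 ^ k` off `V k = ⋃ i, c k i` and `∑ i, μ (c k i)` nearly attains `μ(‖F‖_S > 2 ^ k)`; by the
dyadic layer-cake bound, `∑ k, 2 ^ k ∑ i, μ (c k i) ≤ 2 ‖F‖_{L¹_μ S} + ε`. As `k → -∞` the sets
`V k` exhaust the support of `F`, and as `k → ∞` their outer measures are summable, so outside an
outer-null (hence `𝔪`-null) set every point where `F ≠ 0` lies in a highest level `V k`. This
splits the support into the pieces `c k i` minus the earlier `c k j` and minus all higher levels.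
On such a piece `F` agrees with `F` cut off to the complement of a countable union of generating
sets containing `V (k + 1)`, whose size on `c k i` is at most `2 ^ (k + 1)`; the hypothesis on `𝔪`
bounds its integral by `C 2 ^ (k + 1) μ (c k i)`, and summing gives the constant `4`.
-/

set_option autoImplicit false

open MeasureTheory ProbabilityTheory ENNReal Set Filter

noncomputable section

universe u v w

/-- An outer space: a σ-generating collection of Borel sets, a local measure, and a local
size on a topological (here: measurable) space, valued in a normed space `X`. -/
structure OuterSpace (𝕏 : Type u) [MeasurableSpace 𝕏] (X : Type v)
    [NormedAddCommGroup X] [NormedSpace ℝ X] where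
  gen : Set (Set 𝕏)
  gen_meas : ∀ B ∈ gen, MeasurableSet B
  gen_covers : ∃ c : ℕ → Set 𝕏, (∀ n, c n ∈ gen) ∧ (⋃ n, c n) = Set.univ
  lm : Set 𝕏 → ℝ≥0∞
  lm_empty : lm ∅ = 0
  lm_subadd : ∀ B ∈ gen, ∀ c : ℕ → Set 𝕏, (∀ n, c n ∈ gen) → B ⊆ (⋃ n, c n) →
    lm B ≤ ∑' n, lm (c n)
  size : Set 𝕏 → (𝕏 → X) → ℝ≥0∞
  size_smul : ∀ B ∈ gen, ∀ (F : 𝕏 → X) (a : ℝ), size B (a • F) = (‖a‖₊ : ℝ≥0∞) * size B F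
  size_posdef : ∀ F : 𝕏 → X, (∀ B ∈ gen, size B F = 0) ↔ F = 0
  size_tri : ∃ K : ℝ≥0∞, 1 ≤ K ∧ ∀ B ∈ gen, ∀ F G : 𝕏 → X,
    size B (F + G) ≤ K * (size B F + size B G)

namespace OuterSpace

variable {𝕏 : Type u} [MeasurableSpace 𝕏] {X : Type v}
  [NormedAddCommGroup X] [NormedSpace ℝ X] (O : OuterSpace 𝕏 X)

/-- Outer measure generated by the local measure via countable covers. -/
def outerMeasure (E : Set 𝕏) : ℝ≥0∞ :=
  ⨅ (c : ℕ → Set 𝕏) (_ : ∀ n, c n ∈ O.gen) (_ : E ⊆ ⋃ n, c n), ∑' n, O.lm (c n)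

/-- The collection `𝔅^∪` of countable unions of generating sets. -/
def unions : Set (Set 𝕏) := {V | ∃ c : ℕ → Set 𝕏, (∀ n, c n ∈ O.gen) ∧ V = ⋃ n, c n}

/-- Outer size (outer supremum) of `F`. -/
def outerSize (F : 𝕏 → X) : ℝ≥0∞ :=
  ⨆ (B ∈ O.gen) (V ∈ O.unions), O.size B (Set.indicator Vᶜ F)

/-- Super-level outer measure `μ(‖F‖_S > λ)`. -/
def superLevel (F : 𝕏 → X) (lam : ℝ≥0∞) : ℝ≥0∞ :=
  ⨅ (V ∈ O.unions) (_ : O.outerSize (Set.indicator Vᶜ F) ≤ lam), O.outerMeasure V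

/-- Outer Lebesgue quasinorm `‖F‖_{L^p_μ S}` (for `p = ∞` this is the outer size). -/
def lpNorm (p : ℝ≥0∞) (F : 𝕏 → X) : ℝ≥0∞ :=
  if p = ⊤ then O.outerSize F
  else (∫⁻ lam in Set.Ioi (0:ℝ),
      ENNReal.ofReal (lam ^ (p.toReal - 1)) * O.superLevel F (ENNReal.ofReal lam)) ^ (1 / p.toReal)

/-- Weak outer Lebesgue quasinorm `‖F‖_{L^{p,∞}_μ S}`. -/
def lpWeakNorm (p : ℝ≥0∞) (F : 𝕏 → X) : ℝ≥0∞ :=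
  if p = ⊤ then O.outerSize F
  else ⨆ (lam : ℝ) (_ : 0 < lam),
    ENNReal.ofReal lam * (O.superLevel F (ENNReal.ofReal lam)) ^ (1 / p.toReal)

end OuterSpace

theorem ENNReal.ofReal_two_zpow (k : ℤ) : ENNReal.ofReal (2 ^ k) = 2 ^ k := by
  rw [show (2 : ℝ) ^ k = ((2 ^ k : NNReal) : ℝ) by push_cast; rfl, ENNReal.ofReal_coe_nnreal,
    ENNReal.coe_zpow two_ne_zero]
  rfl

theorem ENNReal.two_zpow_neg_natCast (n : ℕ) : (2 : ℝ≥0∞) ^ (-(n : ℤ)) = 2⁻¹ ^ n := by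
  rw [ENNReal.zpow_neg, zpow_natCast, ← ENNReal.inv_pow]

theorem ENNReal.tsum_two_zpow_mul_le_two_mul_lintegral {f : ℝ≥0∞ → ℝ≥0∞} (hf : Antitone f) :
    ∑' k : ℤ, 2 ^ k * f (2 ^ k) ≤ 2 * ∫⁻ u in Ioi (0 : ℝ), f (ENNReal.ofReal u) := by
  have hpiece (k : ℤ) :
      2 ^ k * f (2 ^ (k + 1)) ≤ ∫⁻ u in Ioc ((2 : ℝ) ^ k) (2 ^ (k + 1)), f (ENNReal.ofReal u) := by
    have hlen : (2 : ℝ) ^ (k + 1) - 2 ^ k = 2 ^ k := by rw [zpow_add_one₀ two_ne_zero]; ring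
    calc 2 ^ k * f (2 ^ (k + 1))
        = ∫⁻ _ in Ioc ((2 : ℝ) ^ k) (2 ^ (k + 1)), f (2 ^ (k + 1)) := by
          rw [setLIntegral_const, Real.volume_Ioc, hlen, ofReal_two_zpow, mul_comm]
      _ ≤ _ := setLIntegral_mono' measurableSet_Ioc fun u hu =>
          hf (by simpa only [ofReal_two_zpow] using ENNReal.ofReal_le_ofReal hu.2)
  have hdisj : Pairwise (Function.onFun Disjoint fun k : ℤ => Ioc ((2 : ℝ) ^ k) (2 ^ (k + 1))) := by
    simpa only [Order.succ_eq_add_one] using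
      (zpow_right_mono₀ (one_le_two (α := ℝ))).pairwise_disjoint_on_Ioc_succ
  calc ∑' k : ℤ, 2 ^ k * f (2 ^ k)
      = ∑' k : ℤ, 2 * (2 ^ k * f (2 ^ (k + 1))) := by
        rw [← (Equiv.addRight (1 : ℤ)).tsum_eq]
        refine tsum_congr fun k => ?_
        rw [Equiv.coe_addRight, ENNReal.zpow_add two_ne_zero ofNat_ne_top, zpow_one]
        ring
    _ = 2 * ∑' k : ℤ, 2 ^ k * f (2 ^ (k + 1)) := ENNReal.tsum_mul_left
    _ ≤ 2 * ∑' k : ℤ, ∫⁻ u in Ioc ((2 : ℝ) ^ k) (2 ^ (k + 1)), f (ENNReal.ofReal u) := by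
        gcongr with k; exact hpiece k
    _ = 2 * ∫⁻ u in ⋃ k : ℤ, Ioc ((2 : ℝ) ^ k) (2 ^ (k + 1)), f (ENNReal.ofReal u) := by
        rw [lintegral_iUnion (fun _ => measurableSet_Ioc) hdisj]
    _ ≤ 2 * ∫⁻ u in Ioi (0 : ℝ), f (ENNReal.ofReal u) := by
        gcongr
        exact iUnion_subset fun k u hu => (_root_.zpow_pos two_pos k).trans hu.1

theorem MeasureTheory.ofReal_norm_integral_le_tsum {α E ι : Type*} [MeasurableSpace α]
    [NormedAddCommGroup E] [NormedSpace ℝ E] [Countable ι] {μ : Measure α} {f : α → E}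
    {s : ι → Set α} (hs : ∀ i, MeasurableSet (s i)) (hd : Pairwise (Function.onFun Disjoint s))
    (hf : Integrable f μ) (hsupp : ∀ᵐ x ∂μ, x ∉ ⋃ i, s i → f x = 0) :
    ENNReal.ofReal ‖∫ x, f x ∂μ‖ ≤ ∑' i, ENNReal.ofReal ‖∫ x in s i, f x ∂μ‖ := by
  simp only [ofReal_norm]
  rw [← setIntegral_eq_integral_of_ae_compl_eq_zero hsupp, integral_iUnion hs hd hf.integrableOn]
  exact enorm_tsum_le_tsum_enorm

theorem Set.pairwise_disjoint_sdiff_iUnion_add {α : Type*} (V : ℤ → Set α) :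
    Pairwise (Function.onFun Disjoint fun k => V k \ ⋃ n : ℕ, V (k + 1 + n)) := by
  refine (pairwise_disjoint_on _).2 fun j k hjk => disjoint_left.2 fun x hxj hxk =>
    hxj.2 (mem_iUnion.2 ⟨(k - j - 1).toNat, ?_⟩)
  rw [Int.toNat_of_nonneg (by omega), show j + 1 + (k - j - 1) = k by ring]
  exact hxk.1

theorem Set.pairwise_disjoint_disjointed_sdiff_iUnion_add {α : Type*} (c : ℤ → ℕ → Set α) :
    Pairwise (Function.onFun Disjoint fun p : ℤ × ℕ =>
      disjointed (c p.1) p.2 \ ⋃ n : ℕ, ⋃ i, c (p.1 + 1 + n) i) := by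
  rintro ⟨k, i⟩ ⟨k', i'⟩ hne
  rcases eq_or_ne k k' with rfl | hk
  · exact (disjoint_disjointed _ fun h => hne (Prod.ext rfl h)).mono sdiff_subset sdiff_subset
  · exact (pairwise_disjoint_sdiff_iUnion_add (fun k => ⋃ i, c k i) hk).mono
      (sdiff_subset_sdiff_left ((disjointed_subset _ _).trans (subset_iUnion _ _)))
      (sdiff_subset_sdiff_left ((disjointed_subset _ _).trans (subset_iUnion _ _)))

namespace OuterSpace

variable {𝕏 : Type u} [MeasurableSpace 𝕏] {X : Type v} [NormedAddCommGroup X] [NormedSpace ℝ X]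
  (O : OuterSpace 𝕏 X) {F : 𝕏 → X} {𝔪 : Measure 𝕏}

theorem mem_unions_of_mem_gen {B : Set 𝕏} (hB : B ∈ O.gen) : B ∈ O.unions :=
  ⟨fun _ => B, fun _ => hB, (iUnion_const B).symm⟩

theorem measurableSet_of_mem_unions {V : Set 𝕏} (hV : V ∈ O.unions) : MeasurableSet V := by
  obtain ⟨c, hc, rfl⟩ := hV
  exact .iUnion fun n => O.gen_meas _ (hc n)

theorem iUnion_mem_unions {ι : Type*} [Countable ι] [Nonempty ι] {v : ι → Set 𝕏}
    (hv : ∀ i, v i ∈ O.unions) : ⋃ i, v i ∈ O.unions := by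
  choose c hc hcv using hv
  obtain ⟨f, hf⟩ := exists_surjective_nat (ι × ℕ)
  refine ⟨fun n => c (f n).1 (f n).2, fun n => hc _ _, ?_⟩
  rw [hf.iUnion_comp fun p => c p.1 p.2, iUnion_prod']
  exact iUnion_congr hcv

theorem union_iUnion_mem_unions {ι : Type*} [Countable ι] {V : Set 𝕏} {v : ι → Set 𝕏}
    (hV : V ∈ O.unions) (hv : ∀ i, v i ∈ O.unions) : V ∪ ⋃ i, v i ∈ O.unions := by
  rw [show V ∪ ⋃ i, v i = ⋃ o : Option ι, o.elim V v from
    (iUnion_option fun o : Option ι => o.elim V v).symm]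
  exact O.iUnion_mem_unions fun o => o.rec hV hv

theorem union_mem_unions {V W : Set 𝕏} (hV : V ∈ O.unions) (hW : W ∈ O.unions) :
    V ∪ W ∈ O.unions := by
  simpa only [iUnion_const] using O.union_iUnion_mem_unions hV fun _ : Unit => hW

theorem size_indicator_compl_le_outerSize {B V W : Set 𝕏} (hB : B ∈ O.gen) (hW : W ∈ O.unions)
    (hVW : V ⊆ W) (F : 𝕏 → X) : O.size B (Wᶜ.indicator F) ≤ O.outerSize (Vᶜ.indicator F) := by
  rw [← inter_eq_left.2 (compl_subset_compl.2 hVW), ← indicator_indicator]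
  exact le_iSup₂_of_le B hB (le_iSup₂_of_le W hW le_rfl)

theorem outerSize_indicator_compl_le {V W : Set 𝕏} (hW : W ∈ O.unions) (hVW : V ⊆ W)
    (F : 𝕏 → X) : O.outerSize (Wᶜ.indicator F) ≤ O.outerSize (Vᶜ.indicator F) :=
  iSup₂_le fun B hB => iSup₂_le fun U hU => by
    rw [indicator_indicator, ← compl_union]
    exact O.size_indicator_compl_le_outerSize hB (O.union_mem_unions hU hW)
      (hVW.trans subset_union_right) F

theorem indicator_compl_iUnion_eq_zero {V : ℕ → Set 𝕏} (hV : ∀ n, V n ∈ O.unions)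
    (hsize : ∀ n, O.outerSize ((V n)ᶜ.indicator F) ≤ 2⁻¹ ^ n) : (⋃ n, V n)ᶜ.indicator F = 0 :=
  (O.size_posdef _).1 fun B hB => le_antisymm
    (ge_of_tendsto' (ENNReal.tendsto_pow_atTop_nhds_zero_of_lt_one (by norm_num)) fun n =>
      (O.size_indicator_compl_le_outerSize hB (O.iUnion_mem_unions hV) (subset_iUnion V n) F).trans
        (hsize n))
    bot_le

theorem outerMeasure_le_tsum_tsum {E : Set 𝕏} {c : ℕ → ℕ → Set 𝕏} (hc : ∀ n i, c n i ∈ O.gen)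
    (hE : E ⊆ ⋃ n, ⋃ i, c n i) : O.outerMeasure E ≤ ∑' n, ∑' i, O.lm (c n i) := by
  let e := Nat.pairEquiv.symm
  have hcover : E ⊆ ⋃ j, c (e j).1 (e j).2 := by
    rwa [e.surjective.iUnion_comp fun p => c p.1 p.2, iUnion_prod']
  calc O.outerMeasure E ≤ ∑' j, O.lm (c (e j).1 (e j).2) :=
        iInf₂_le_of_le _ (fun j => hc _ _) (iInf_le_of_le hcover le_rfl)
    _ = ∑' p : ℕ × ℕ, O.lm (c p.1 p.2) := e.tsum_eq fun p => O.lm (c p.1 p.2)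
    _ = ∑' n, ∑' i, O.lm (c n i) := ENNReal.tsum_prod (f := fun n i => O.lm (c n i))

theorem outerMeasure_iInter_iUnion_add_eq_zero {c : ℕ → ℕ → Set 𝕏} (hc : ∀ n i, c n i ∈ O.gen)
    (hsum : ∑' n, ∑' i, O.lm (c n i) ≠ ⊤) :
    O.outerMeasure (⋂ m, ⋃ n, ⋃ i, c (n + m) i) = 0 :=
  le_antisymm (ge_of_tendsto' (ENNReal.tendsto_sum_nat_add _ hsum) fun m =>
    O.outerMeasure_le_tsum_tsum (fun _ _ => hc _ _) (iInter_subset _ m)) bot_le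

theorem superLevel_antitone (F : 𝕏 → X) : Antitone (O.superLevel F) := fun _ _ h =>
  le_iInf₂ fun V hV => le_iInf fun hle => iInf₂_le_of_le V hV (iInf_le_of_le (hle.trans h) le_rfl)

theorem exists_cover_of_superLevel_lt {lam t : ℝ≥0∞} (h : O.superLevel F lam < t) :
    ∃ c : ℕ → Set 𝕏, (∀ n, c n ∈ O.gen) ∧ O.outerSize ((⋃ n, c n)ᶜ.indicator F) ≤ lam ∧
      ∑' n, O.lm (c n) < t := by
  simp only [superLevel, outerMeasure, iInf_lt_iff] at h
  obtain ⟨V, -, hVF, c, hc, hVc, hct⟩ := h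
  exact ⟨c, hc, (O.outerSize_indicator_compl_le ⟨c, hc, rfl⟩ hVc F).trans hVF, hct⟩

theorem lpNorm_one_eq_lintegral (F : 𝕏 → X) :
    O.lpNorm 1 F = ∫⁻ u in Ioi (0 : ℝ), O.superLevel F (ENNReal.ofReal u) := by
  simp [lpNorm]

theorem tsum_two_zpow_mul_superLevel_le (F : 𝕏 → X) :
    ∑' k : ℤ, 2 ^ k * O.superLevel F (2 ^ k) ≤ 2 * O.lpNorm 1 F := by
  rw [lpNorm_one_eq_lintegral]
  exact ENNReal.tsum_two_zpow_mul_le_two_mul_lintegral (O.superLevel_antitone F)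

theorem integral_eq_zero_of_forall_setIntegral_gen_eq_zero
    (h : ∀ B ∈ O.gen, ∀ G : 𝕏 → X, IntegrableOn G B 𝔪 → ∫ x in B, G x ∂𝔪 = 0)
    (hF : Integrable F 𝔪) : ∫ x, F x ∂𝔪 = 0 := by
  obtain ⟨c, hc, hcU⟩ := O.gen_covers
  have hcm : ∀ n, MeasurableSet (c n) := fun n => O.gen_meas _ (hc n)
  have hpiece (n : ℕ) : ∫ x in disjointed c n, F x ∂𝔪 = 0 := by
    have hW : MeasurableSet (⋂ j < n, (c j)ᶜ) := .biInter (to_countable _) fun j _ => (hcm j).compl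
    rw [disjointed_eq_inter_compl, ← setIntegral_indicator hW]
    exact h _ (hc n) _ (hF.indicator hW).integrableOn
  rw [← setIntegral_univ, ← hcU, ← iUnion_disjointed,
    integral_iUnion (.disjointed hcm) (disjoint_disjointed c) hF.integrableOn]
  simp [hpiece]

theorem ae_eq_zero_of_lpNorm_one_eq_zero
    (hac : ∀ A : Set 𝕏, MeasurableSet A → O.outerMeasure A = 0 → 𝔪 A = 0)
    (hA : O.lpNorm 1 F = 0) : F =ᵐ[𝔪] 0 := by
  have hlevel (n : ℕ) : O.superLevel F (2⁻¹ ^ n) < 2⁻¹ ^ n := by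
    have h := (ENNReal.le_tsum (-(n : ℤ))).trans (O.tsum_two_zpow_mul_superLevel_le F)
    rw [hA, mul_zero, nonpos_iff_eq_zero, ENNReal.two_zpow_neg_natCast, mul_eq_zero] at h
    rw [h.resolve_left (pow_ne_zero _ (by norm_num))]
    exact ENNReal.pow_pos (by norm_num) n
  choose c hc hsize hlm using fun n => O.exists_cover_of_superLevel_lt (hlevel n)
  have hfin : ∑' n, ∑' i, O.lm (c n i) ≠ ⊤ := by
    refine ne_top_of_le_ne_top ?_ (ENNReal.tsum_le_tsum fun n => (hlm n).le)
    rw [ENNReal.tsum_geometric, ENNReal.one_sub_inv_two, inv_inv]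
    exact ofNat_ne_top
  have hN := O.outerMeasure_iInter_iUnion_add_eq_zero hc hfin
  have hNm : MeasurableSet (⋂ m, ⋃ n, ⋃ i, c (n + m) i) :=
    .iInter fun m => .iUnion fun n => .iUnion fun i => O.gen_meas _ (hc _ _)
  refine (measure_eq_zero_iff_ae_notMem.1 (hac _ hNm hN)).mono fun x hx => ?_
  obtain ⟨m, hm⟩ := not_forall.1 (mem_iInter.not.1 hx)
  have hvanish := O.indicator_compl_iUnion_eq_zero (V := fun n => ⋃ i, c (n + m) i)
    (fun n => ⟨c (n + m), hc _, rfl⟩) fun n =>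
      (hsize _).trans (pow_le_pow_of_le_one zero_le (by norm_num) (Nat.le_add_right n m))
  exact (indicator_of_mem hm F).symm.trans (congrFun hvanish x)

theorem ae_exists_mem_sdiff_of_dyadic_covers
    (hac : ∀ A : Set 𝕏, MeasurableSet A → O.outerMeasure A = 0 → 𝔪 A = 0)
    {c : ℤ → ℕ → Set 𝕏} (hc : ∀ k i, c k i ∈ O.gen)
    (hsize : ∀ k, O.outerSize ((⋃ i, c k i)ᶜ.indicator F) ≤ 2 ^ k)
    (hfin : ∑' n : ℕ, ∑' i, O.lm (c n i) ≠ ⊤) :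
    ∀ᵐ x ∂𝔪, F x ≠ 0 → ∃ k, x ∈ (⋃ i, c k i) \ ⋃ n : ℕ, ⋃ i, c (k + 1 + n) i := by
  have hN := O.outerMeasure_iInter_iUnion_add_eq_zero (c := fun n i => c n i)
    (fun _ _ => hc _ _) hfin
  have hNm : MeasurableSet (⋂ m : ℕ, ⋃ n : ℕ, ⋃ i, c ((n + m : ℕ) : ℤ) i) :=
    .iInter fun m => .iUnion fun n => .iUnion fun i => O.gen_meas _ (hc _ _)
  have hvanish := O.indicator_compl_iUnion_eq_zero (V := fun n : ℕ => ⋃ i, c (-n) i)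
    (fun n => ⟨_, hc _, rfl⟩) fun n => (hsize _).trans (ENNReal.two_zpow_neg_natCast n).le
  refine (measure_eq_zero_iff_ae_notMem.1 (hac _ hNm hN)).mono fun x hxN hFx => ?_
  have hmem : ∃ k, x ∈ ⋃ i, c k i := by
    by_contra h
    have hx : x ∉ ⋃ n : ℕ, ⋃ i, c (-n) i := fun hx => h <| by
      obtain ⟨n, hn⟩ := mem_iUnion.1 hx
      exact ⟨-n, hn⟩
    exact hFx ((indicator_of_mem hx F).symm.trans (congrFun hvanish x))
  obtain ⟨m, hm⟩ := not_forall.1 (mem_iInter.not.1 hxN)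
  have hbdd : ∃ b, ∀ k, x ∈ ⋃ i, c k i → k ≤ b := by
    refine ⟨m, fun k hk => not_lt.1 fun hmk => hm (mem_iUnion.2 ⟨(k - m).toNat, ?_⟩)⟩
    rwa [Nat.cast_add, Int.toNat_of_nonneg (by omega), sub_add_cancel]
  obtain ⟨k, hk, hmax⟩ := Int.exists_greatest_of_bdd hbdd hmem
  refine ⟨k, hk, fun hU => ?_⟩
  obtain ⟨n, hn⟩ := mem_iUnion.1 hU
  have := hmax _ hn
  omega

theorem ofReal_norm_setIntegral_sdiff_le {C : ℝ≥0∞}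
    (hi : ∀ B ∈ O.gen, ∀ G : 𝕏 → X, IntegrableOn G B 𝔪 →
      ENNReal.ofReal ‖∫ x in B, G x ∂𝔪‖ ≤ C * O.size B G * O.lm B)
    (hF : Integrable F 𝔪) {B V W : Set 𝕏} (hB : B ∈ O.gen) (hW : W ∈ O.unions) (hVW : V ⊆ W) :
    ENNReal.ofReal ‖∫ x in B \ W, F x ∂𝔪‖ ≤ C * O.outerSize (Vᶜ.indicator F) * O.lm B := by
  have hWm := (O.measurableSet_of_mem_unions hW).compl
  rw [sdiff_eq, ← setIntegral_indicator hWm]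
  refine (hi B hB _ (hF.indicator hWm).integrableOn).trans ?_
  gcongr
  exact O.size_indicator_compl_le_outerSize hB hW hVW F

theorem ofReal_norm_integral_le_of_dyadic_covers {C : ℝ≥0∞}
    (hi : ∀ B ∈ O.gen, ∀ G : 𝕏 → X, IntegrableOn G B 𝔪 →
      ENNReal.ofReal ‖∫ x in B, G x ∂𝔪‖ ≤ C * O.size B G * O.lm B)
    (hac : ∀ A : Set 𝕏, MeasurableSet A → O.outerMeasure A = 0 → 𝔪 A = 0)
    (hF : Integrable F 𝔪) {c : ℤ → ℕ → Set 𝕏} (hc : ∀ k i, c k i ∈ O.gen)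
    (hsize : ∀ k, O.outerSize ((⋃ i, c k i)ᶜ.indicator F) ≤ 2 ^ k)
    (hfin : ∑' n : ℕ, ∑' i, O.lm (c n i) ≠ ⊤) :
    ENNReal.ofReal ‖∫ x, F x ∂𝔪‖ ≤ 2 * C * ∑' k : ℤ, 2 ^ k * ∑' i, O.lm (c k i) := by
  set U : ℤ → Set 𝕏 := fun j => ⋃ n : ℕ, ⋃ i, c (j + n) i
  set W : ℤ × ℕ → Set 𝕏 := fun p => U (p.1 + 1) ∪ ⋃ j : Iio p.2, c p.1 j
  set P : ℤ × ℕ → Set 𝕏 := fun p => c p.1 p.2 \ W p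
  have hW (p : ℤ × ℕ) : W p ∈ O.unions :=
    O.union_iUnion_mem_unions (O.iUnion_mem_unions fun n => ⟨_, hc _, rfl⟩)
      fun j => O.mem_unions_of_mem_gen (hc _ _)
  have hP (p : ℤ × ℕ) : P p = disjointed (c p.1) p.2 \ U (p.1 + 1) := by
    ext x
    simp only [iUnion_coe_set, mem_Iio, Set.mem_sdiff, mem_union, mem_iUnion, exists_prop,
      not_or, not_exists, not_and, disjointed_eq_inter_compl, mem_inter_iff, mem_iInter,
      mem_compl_iff, P, W]
    tauto
  have hPm (p : ℤ × ℕ) : MeasurableSet (P p) :=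
    (O.gen_meas _ (hc _ _)).diff (O.measurableSet_of_mem_unions (hW p))
  have hPd : Pairwise (Function.onFun Disjoint P) := by
    rw [funext hP]
    exact pairwise_disjoint_disjointed_sdiff_iUnion_add c
  have hsupp : ∀ᵐ x ∂𝔪, x ∉ ⋃ p, P p → F x = 0 :=
    (O.ae_exists_mem_sdiff_of_dyadic_covers hac hc hsize hfin).mono fun x hx hxP => by
      by_contra hFx
      obtain ⟨k, hxk, hxU⟩ := hx hFx
      rw [← iUnion_disjointed] at hxk
      obtain ⟨i, hxi⟩ := mem_iUnion.1 hxk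
      exact hxP (mem_iUnion.2 ⟨(k, i), by rw [hP]; exact ⟨hxi, hxU⟩⟩)
  have hpiece (p : ℤ × ℕ) :
      ENNReal.ofReal ‖∫ x in P p, F x ∂𝔪‖ ≤ 2 * C * (2 ^ p.1 * O.lm (c p.1 p.2)) := by
    have hVW : ⋃ i, c (p.1 + 1) i ⊆ W p :=
      subset_union_of_subset_left (subset_iUnion_of_subset 0 (by simp)) _
    calc _ ≤ C * O.outerSize ((⋃ i, c (p.1 + 1) i)ᶜ.indicator F) * O.lm (c p.1 p.2) :=
          O.ofReal_norm_setIntegral_sdiff_le hi hF (hc _ _) (hW p) hVW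
      _ ≤ C * 2 ^ (p.1 + 1) * O.lm (c p.1 p.2) := by gcongr; exact hsize _
      _ = 2 * C * (2 ^ p.1 * O.lm (c p.1 p.2)) := by
          rw [ENNReal.zpow_add two_ne_zero ofNat_ne_top, zpow_one]; ring
  calc ENNReal.ofReal ‖∫ x, F x ∂𝔪‖ ≤ ∑' p, ENNReal.ofReal ‖∫ x in P p, F x ∂𝔪‖ :=
        ofReal_norm_integral_le_tsum hPm hPd hF hsupp
    _ ≤ ∑' p : ℤ × ℕ, 2 * C * (2 ^ p.1 * O.lm (c p.1 p.2)) := ENNReal.tsum_le_tsum hpiece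
    _ = 2 * C * ∑' k : ℤ, 2 ^ k * ∑' i, O.lm (c k i) := by
        rw [ENNReal.tsum_mul_left, ENNReal.tsum_prod (f := fun k i => 2 ^ k * O.lm (c k i))]
        simp_rw [ENNReal.tsum_mul_left]

theorem ofReal_norm_integral_le_four_mul {C : ℝ≥0∞}
    (hi : ∀ B ∈ O.gen, ∀ G : 𝕏 → X, IntegrableOn G B 𝔪 →
      ENNReal.ofReal ‖∫ x in B, G x ∂𝔪‖ ≤ C * O.size B G * O.lm B)
    (hac : ∀ A : Set 𝕏, MeasurableSet A → O.outerMeasure A = 0 → 𝔪 A = 0)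
    (hF : Integrable F 𝔪) (hC : C ≠ ⊤) (hA : O.lpNorm 1 F ≠ ⊤) :
    ENNReal.ofReal ‖∫ x, F x ∂𝔪‖ ≤ 4 * C * O.lpNorm 1 F := by
  refine ENNReal.le_of_forall_pos_le_add fun δ hδ _ => ?_
  obtain ⟨ε, hε, hεδ⟩ := ENNReal.exists_nnreal_pos_mul_lt (mul_ne_top (ofNat_ne_top (n := 2)) hC)
    (coe_ne_zero.2 hδ.ne')
  obtain ⟨η, hη, hηε⟩ := ENNReal.exists_pos_tsum_mul_lt_of_countable (coe_ne_zero.2 hε.ne')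
    (fun k : ℤ => (2 : ℝ≥0∞) ^ k) fun k => zpow_ne_top two_ne_zero ofNat_ne_top k
  have hlevel (k : ℤ) : O.superLevel F (2 ^ k) < O.superLevel F (2 ^ k) + η k := by
    refine ENNReal.lt_add_right (fun htop => ?_) (coe_ne_zero.2 (hη k).ne')
    have h := (ENNReal.le_tsum k).trans (O.tsum_two_zpow_mul_superLevel_le F)
    rw [htop, ENNReal.mul_top (ENNReal.zpow_pos two_ne_zero ofNat_ne_top k).ne', top_le_iff] at h
    exact mul_ne_top ofNat_ne_top hA h
  choose c hc hsize hlm using fun k => O.exists_cover_of_superLevel_lt (hlevel k)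
  have hS : ∑' k : ℤ, 2 ^ k * ∑' i, O.lm (c k i) ≤ 2 * O.lpNorm 1 F + (ε : ℝ≥0∞) :=
    calc ∑' k : ℤ, 2 ^ k * ∑' i, O.lm (c k i)
        ≤ ∑' k : ℤ, (2 ^ k * O.superLevel F (2 ^ k) + 2 ^ k * (η k : ℝ≥0∞)) :=
          ENNReal.tsum_le_tsum fun k => by rw [← mul_add]; gcongr; exact (hlm k).le
      _ = ∑' k : ℤ, 2 ^ k * O.superLevel F (2 ^ k) + ∑' k : ℤ, 2 ^ k * (η k : ℝ≥0∞) :=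
          ENNReal.tsum_add
      _ ≤ 2 * O.lpNorm 1 F + (ε : ℝ≥0∞) := add_le_add (O.tsum_two_zpow_mul_superLevel_le F) hηε.le
  have hfin : ∑' n : ℕ, ∑' i, O.lm (c n i) ≠ ⊤ := by
    refine ne_top_of_le_ne_top (ne_top_of_le_ne_top ?_ hS) (calc
      ∑' n : ℕ, ∑' i, O.lm (c n i) ≤ ∑' n : ℕ, 2 ^ (n : ℤ) * ∑' i, O.lm (c n i) :=
        ENNReal.tsum_le_tsum fun n => le_mul_of_one_le_left' (by simp [one_le_pow₀])
      _ ≤ ∑' k : ℤ, 2 ^ k * ∑' i, O.lm (c k i) :=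
        ENNReal.tsum_comp_le_tsum_of_injective Nat.cast_injective _)
    exact add_ne_top.2 ⟨mul_ne_top ofNat_ne_top hA, coe_ne_top⟩
  calc ENNReal.ofReal ‖∫ x, F x ∂𝔪‖ ≤ 2 * C * ∑' k : ℤ, 2 ^ k * ∑' i, O.lm (c k i) :=
        O.ofReal_norm_integral_le_of_dyadic_covers hi hac hF hc hsize hfin
    _ ≤ 2 * C * (2 * O.lpNorm 1 F + ε) := by gcongr
    _ = 4 * C * O.lpNorm 1 F + ε * (2 * C) := by ring
    _ ≤ 4 * C * O.lpNorm 1 F + δ := by gcongr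

end OuterSpace

/-- Radon–Nikodym-type domination: if a Borel measure `𝔪` is controlled on
generating sets by `C ‖F‖_{S(B)} μ(B)` and is absolutely continuous with respect to the outer
measure, then `‖∫ F d𝔪‖ ≲ C ‖F‖_{L¹_μ S}`. -/
theorem statement16 :
    ∃ cc : ℝ≥0∞, cc ≠ ⊤ ∧
      ∀ (𝕏 : Type u) [MeasurableSpace 𝕏] (X : Type v)
        [NormedAddCommGroup X] [NormedSpace ℝ X] [CompleteSpace X]
        (O : OuterSpace 𝕏 X),
        (∃ c : ℕ → Set 𝕏, (⋃ n, c n) = Set.univ ∧ ∀ n, O.outerMeasure (c n) ≠ ⊤) →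
        ∀ (𝔪 : Measure 𝕏) (C : ℝ≥0∞),
          (∀ B ∈ O.gen, ∀ F : 𝕏 → X, IntegrableOn F B 𝔪 →
            ENNReal.ofReal ‖∫ x in B, F x ∂𝔪‖ ≤ C * O.size B F * O.lm B) →
          (∀ A : Set 𝕏, MeasurableSet A → O.outerMeasure A = 0 → 𝔪 A = 0) →
          ∀ F : 𝕏 → X, Integrable F 𝔪 →
            ENNReal.ofReal ‖∫ x, F x ∂𝔪‖ ≤ cc * C * O.lpNorm 1 F := by
  refine ⟨4, ofNat_ne_top, fun 𝕏 _ X _ _ _ O _ 𝔪 C hi hac F hF => ?_⟩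
  rcases eq_or_ne C 0 with rfl | hC0
  · rw [O.integral_eq_zero_of_forall_setIntegral_gen_eq_zero
      (fun B hB G hG => by simpa using hi B hB G hG) hF]
    simp
  rcases eq_or_ne (O.lpNorm 1 F) 0 with hA0 | hA0
  · rw [integral_eq_zero_of_ae (O.ae_eq_zero_of_lpNorm_one_eq_zero hac hA0)]
    simp
  rcases eq_or_ne C ⊤ with rfl | hCt
  · simp [hA0]
  rcases eq_or_ne (O.lpNorm 1 F) ⊤ with hAt | hAt
  · simp [hAt, hC0]
  exact O.ofReal_norm_integral_le_four_mul hi hac hF hCt hAt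
end
end
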